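/- arXiv:2107.12987 — 3 statements merged into one kernel-verified Lean document; each statement's English description precedes it below -/
import Mathlib

section
/- Let $\rho:\mathbb{R}\to[0,1]$ be even, continuous, nondecreasing on $[0,\infty)$, with $\rho(0)=0$, $\sup_u\rho(u)=1$, and strictly increasing on $\{u\ge 0:\rho(u)<1\}$. Let $u$ be a random variable with even density $f_0$ that is nonincreasing in $|t|$ and strictly decreasing in $|t|$ in a neighbourhood of $0$. Then for every $c\ne 0$, $\mathbb{E}\,\rho(u-c)>\mathbb{E}\,\rho(u)$. -/
/-!
Write `f` for the density of `u`. After the substitutions `t ↦ t + c` and `t ↦ -t`,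
`2 (E ρ(u - c) - E ρ(u)) = ∫ (ρ(t + c) - ρ(t)) (f(t) - f(t + c)) dt`.
Both factors of the integrand have the sign of `|t + c| - |t|`, so it is nonnegative, and for
small `t` of the sign of `c` both are strictly positive: `f` is strictly decreasing near `0`,
and `ρ(t) < 1` there because `ρ` is continuous with `ρ(0) = 0`.
-/

open MeasureTheory Filter Topology Set

theorem Function.Even.apply_abs {α β : Type*} [AddGroup α] [LinearOrder α] {f : α → β}
    (hf : Function.Even f) (a : α) : f |a| = f a := by
  rcases abs_choice a with h | h <;> simp only [h, hf a]

def RadiallyAntitone (f : ℝ → ℝ) : Prop := ∀ s t : ℝ, |s| ≤ |t| → f t ≤ f s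

def RadiallyMonotone (f : ℝ → ℝ) : Prop := ∀ s t : ℝ, |s| ≤ |t| → f s ≤ f t

namespace RadiallyAntitone

variable {f : ℝ → ℝ}

theorem apply_abs (hf : RadiallyAntitone f) (t : ℝ) : f |t| = f t :=
  le_antisymm (hf _ _ (abs_abs t).ge) (hf _ _ (abs_abs t).le)

theorem even (hf : RadiallyAntitone f) : Function.Even f := fun t => by
  rw [← hf.apply_abs, abs_neg, hf.apply_abs]

theorem measurable (hf : RadiallyAntitone f) : Measurable f := by
  have hanti : Antitone fun x : ℝ => f (max x 0) := fun x y hxy =>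
    hf _ _ (by simpa only [abs_of_nonneg (le_max_right _ (0 : ℝ))] using max_le_max_right 0 hxy)
  have hcomp : (fun x : ℝ => f (max x 0)) ∘ abs = f := by
    funext t
    simp only [Function.comp_apply, max_eq_left (abs_nonneg t), hf.apply_abs]
  exact hcomp ▸ hanti.measurable.comp measurable_abs

theorem lt_of_abs_lt {ε : ℝ} (hf : RadiallyAntitone f)
    (hstrict : ∀ s t : ℝ, |s| < |t| → |t| ≤ ε → f t < f s) {x y : ℝ}
    (hxy : |x| < |y|) (hxε : |x| < ε) : f y < f x := by
  rcases le_or_gt |y| ε with hyε | hεy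
  · exact hstrict x y hxy hyε
  · have hε : 0 < ε := (abs_nonneg x).trans_lt hxε
    calc f y ≤ f ε := hf ε y (by rw [abs_of_pos hε]; exact hεy.le)
      _ < f x := hstrict x ε (by rwa [abs_of_pos hε]) (abs_of_pos hε).le

end RadiallyAntitone

namespace RadiallyMonotone

variable {ρ : ℝ → ℝ}

theorem of_even_of_monotoneOn (heven : Function.Even ρ)
    (hmono : ∀ s t : ℝ, 0 ≤ s → s ≤ t → ρ s ≤ ρ t) : RadiallyMonotone ρ := fun s t hst => by
  simpa only [heven.apply_abs] using hmono |s| |t| (abs_nonneg s) hst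

theorem sub_mul_sub_nonneg {f : ℝ → ℝ} (hρ : RadiallyMonotone ρ) (hf : RadiallyAntitone f)
    (x y : ℝ) : 0 ≤ (ρ y - ρ x) * (f x - f y) := by
  rcases le_total |x| |y| with hxy | hyx
  · exact mul_nonneg (sub_nonneg.2 (hρ x y hxy)) (sub_nonneg.2 (hf x y hxy))
  · exact mul_nonneg_of_nonpos_of_nonpos (sub_nonpos.2 (hρ y x hyx)) (sub_nonpos.2 (hf y x hyx))

end RadiallyMonotone

theorem apply_lt_apply_of_abs_lt {ρ : ℝ → ℝ} (heven : Function.Even ρ) (hle : ∀ t, ρ t ≤ 1)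
    (hstrict : ∀ s t : ℝ, 0 ≤ s → s < t → ρ t < 1 → ρ s < ρ t) {x y : ℝ} (hxy : |x| < |y|)
    (hx : ρ x < 1) : ρ x < ρ y := by
  rcases (hle y).lt_or_eq with hy | hy
  · simpa only [heven.apply_abs] using
      hstrict |x| |y| (abs_nonneg x) hxy (by rwa [heven.apply_abs])
  · exact hy ▸ hx

section Integrals

variable {ρ f : ℝ → ℝ} {C : ℝ}

theorem integral_comp_add_mul_eq (hρe : Function.Even ρ) (hfe : Function.Even f) (c : ℝ) :
    ∫ t, ρ (t + c) * f t = ∫ t, ρ (t - c) * f t := by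
  rw [← integral_neg_eq_self]
  congr 1 with t
  rw [show -t + c = -(t - c) by ring, hρe, hfe]

theorem two_mul_sub_eq_integral_sub_mul_sub (hρm : Measurable ρ) (hρC : ∀ t, ‖ρ t‖ ≤ C)
    (hρe : Function.Even ρ) (hf : Integrable f) (hfe : Function.Even f) (c : ℝ) :
    2 * ((∫ t, ρ (t - c) * f t) - ∫ t, ρ t * f t) =
      ∫ t, (ρ (t + c) - ρ t) * (f t - f (t + c)) := by
  have hmul : ∀ a {g : ℝ → ℝ}, Integrable g → Integrable fun t => ρ (t + a) * g t :=
    fun a g hg => hg.bdd_mul (hρm.comp (measurable_add_const a)).aestronglyMeasurable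
      (ae_of_all _ fun t => hρC _)
  have hρf : Integrable fun t => ρ t * f t := by simpa using hmul 0 hf
  have hρf_add : Integrable fun t => ρ t * f (t + c) := by simpa using hmul 0 (hf.comp_add_right c)
  have htrans : ∫ t, ρ t * f (t + c) = ∫ t, ρ (t - c) * f t := by
    simpa using (integral_sub_right_eq_self (fun t => ρ t * f (t + c)) c).symm
  calc 2 * ((∫ t, ρ (t - c) * f t) - ∫ t, ρ t * f t)
      = ((∫ t, ρ (t + c) * f t) - ∫ t, ρ (t + c) * f (t + c)) -
          ((∫ t, ρ t * f t) - ∫ t, ρ t * f (t + c)) := by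
        rw [integral_comp_add_mul_eq hρe hfe, integral_add_right_eq_self (fun t => ρ t * f t),
          htrans]
        ring
    _ = ∫ t, (ρ (t + c) - ρ t) * (f t - f (t + c)) := by
        rw [← integral_sub (hmul c hf) (hρf.comp_add_right c), ← integral_sub hρf hρf_add,
          ← integral_sub]
        · congr 1 with t
          ring
        · exact (hmul c hf).sub (hρf.comp_add_right c)
        · exact hρf.sub hρf_add

theorem integral_sub_mul_sub_pos {ε c : ℝ} (hρc : Continuous ρ) (hρz : ρ 0 = 0)
    (hρC : ∀ t, ‖ρ t‖ ≤ C) (hρ : RadiallyMonotone ρ)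
    (hρlt : ∀ x y : ℝ, |x| < |y| → ρ x < 1 → ρ x < ρ y) (hf : Integrable f)
    (hfa : RadiallyAntitone f) (hstrict : ∀ s t : ℝ, |s| < |t| → |t| ≤ ε → f t < f s)
    (hε : 0 < ε) (hc : 0 < c) :
    0 < ∫ t, (ρ (t + c) - ρ t) * (f t - f (t + c)) := by
  set h := fun t => (ρ (t + c) - ρ t) * (f t - f (t + c))
  have hnn : 0 ≤ h := fun t => hρ.sub_mul_sub_nonneg hfa t (t + c)
  have hint : Integrable h :=
    (hf.sub (hf.comp_add_right c)).bdd_mul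
      ((hρc.comp (continuous_add_const c)).sub hρc).aestronglyMeasurable
      (ae_of_all _ fun t => (norm_sub_le _ _).trans (add_le_add (hρC _) (hρC _)))
  have hnear : ∀ᶠ t in 𝓝[>] 0, ρ t < 1 ∧ t < ε :=
    nhdsWithin_le_nhds <| (hρc.continuousAt.eventually_lt continuousAt_const
      (by rw [hρz]; exact one_pos)).and (eventually_lt_nhds hε)
  obtain ⟨b, hb, hsub⟩ := mem_nhdsGT_iff_exists_Ioo_subset.1 hnear
  have hpos : ∀ t ∈ Ioo 0 b, 0 < h t := by
    intro t ht
    obtain ⟨hρt, htε⟩ := hsub ht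
    have habs : |t| < |t + c| := by
      rw [abs_of_pos ht.1, abs_of_pos (by linarith [ht.1])]
      linarith
    exact mul_pos (sub_pos.2 (hρlt t (t + c) habs hρt))
      (sub_pos.2 (hfa.lt_of_abs_lt hstrict habs (by rwa [abs_of_pos ht.1])))
  have hIoo : 0 < volume (Ioo (0 : ℝ) b) := by
    simpa [Real.volume_Ioo] using hb
  exact (integral_pos_iff_support_of_nonneg hnn hint).2
    (hIoo.trans_le (measure_mono fun t ht => (hpos t ht).ne'))

theorem integral_mul_lt_integral_comp_sub_mul {ε c : ℝ} (hρc : Continuous ρ)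
    (hρz : ρ 0 = 0) (hρC : ∀ t, ‖ρ t‖ ≤ C) (hρe : Function.Even ρ) (hρ : RadiallyMonotone ρ)
    (hρlt : ∀ x y : ℝ, |x| < |y| → ρ x < 1 → ρ x < ρ y) (hf : Integrable f)
    (hfa : RadiallyAntitone f) (hstrict : ∀ s t : ℝ, |s| < |t| → |t| ≤ ε → f t < f s)
    (hε : 0 < ε) (hc : c ≠ 0) :
    ∫ t, ρ t * f t < ∫ t, ρ (t - c) * f t := by
  wlog hc_pos : 0 < c generalizing c
  · have := this (neg_ne_zero.2 hc) (neg_pos.2 (hc.lt_of_le (not_lt.1 hc_pos)))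
    simpa only [sub_neg_eq_add, integral_comp_add_mul_eq hρe hfa.even] using this
  have hpos := integral_sub_mul_sub_pos hρc hρz hρC hρ hρlt hf hfa hstrict hε hc_pos
  have := two_mul_sub_eq_integral_sub_mul_sub hρc.measurable hρC hρe hf hfa.even c
  linarith

end Integrals

section Density

variable {Ω : Type*} [MeasurableSpace Ω] {μ : Measure Ω} {u : Ω → ℝ} {f : ℝ → ℝ}

theorem integrable_of_map_eq_withDensity [IsFiniteMeasure μ] (hf : Measurable f)
    (hf0 : ∀ t, 0 ≤ f t) (hdens : μ.map u = volume.withDensity fun t => ENNReal.ofReal (f t)) :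
    Integrable f := by
  refine ⟨hf.aestronglyMeasurable, (hasFiniteIntegral_iff_ofReal (ae_of_all _ hf0)).2 ?_⟩
  rw [← setLIntegral_univ, ← withDensity_apply _ MeasurableSet.univ, ← hdens]
  exact measure_lt_top _ _

theorem integral_comp_eq_integral_mul_of_map_eq_withDensity (hu : Measurable u)
    (hf : Measurable f) (hf0 : ∀ t, 0 ≤ f t)
    (hdens : μ.map u = volume.withDensity fun t => ENNReal.ofReal (f t)) {g : ℝ → ℝ}
    (hg : Measurable g) : ∫ ω, g (u ω) ∂μ = ∫ t, g t * f t := by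
  rw [← integral_map hu.aemeasurable hg.aestronglyMeasurable, hdens,
    integral_withDensity_eq_integral_toReal_smul hf.ennreal_ofReal
      (ae_of_all _ fun _ => ENNReal.ofReal_lt_top)]
  congr 1 with t
  rw [ENNReal.toReal_ofReal (hf0 t), smul_eq_mul, mul_comm]

end Density

theorem stmt2_general {Ω : Type*} [MeasurableSpace Ω] (μ : Measure Ω) [IsProbabilityMeasure μ]
    (u : Ω → ℝ) (hu : Measurable u) (f0 : ℝ → ℝ) (hf0nn : ∀ t, 0 ≤ f0 t)
    (hdens : μ.map u = MeasureTheory.volume.withDensity fun t => ENNReal.ofReal (f0 t))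
    (hf0mono : ∀ s t : ℝ, |s| ≤ |t| → f0 t ≤ f0 s)
    (hf0strict : ∃ ε > (0:ℝ), ∀ s t : ℝ, |s| < |t| → |t| ≤ ε → f0 t < f0 s)
    (ρ : ℝ → ℝ) (hρc : Continuous ρ) (hρe : ∀ t, ρ (-t) = ρ t) (hρz : ρ 0 = 0)
    (hρnn : ∀ t, 0 ≤ ρ t) (hρle : ∀ t, ρ t ≤ 1)
    (hρmono : ∀ s t : ℝ, 0 ≤ s → s ≤ t → ρ s ≤ ρ t)
    (hρstrict : ∀ s t : ℝ, 0 ≤ s → s < t → ρ t < 1 → ρ s < ρ t) :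
    ∀ c : ℝ, c ≠ 0 → ∫ ω, ρ (u ω) ∂μ < ∫ ω, ρ (u ω - c) ∂μ := by
  intro c hc
  have hf0 : RadiallyAntitone f0 := hf0mono
  obtain ⟨ε, hε, hstrict⟩ := hf0strict
  have hlaw (g : ℝ → ℝ) (hg : Continuous g) : ∫ ω, g (u ω) ∂μ = ∫ t, g t * f0 t :=
    integral_comp_eq_integral_mul_of_map_eq_withDensity hu hf0.measurable hf0nn hdens hg.measurable
  rw [hlaw ρ hρc, hlaw (fun t => ρ (t - c)) (hρc.comp (continuous_sub_right c))]
  exact integral_mul_lt_integral_comp_sub_mul hρc hρz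
    (fun t => (Real.norm_of_nonneg (hρnn t)).trans_le (hρle t)) hρe
    (.of_even_of_monotoneOn hρe hρmono) (fun _ _ => apply_lt_apply_of_abs_lt hρe hρle hρstrict)
    (integrable_of_map_eq_withDensity hf0.measurable hf0nn hdens) hf0 hstrict hε hc

/-- If `u` has an even density, nonincreasing in `|t|` and strictly decreasing near `0`, and
`ρ` is a bounded rho-function, then `E ρ(u - c) > E ρ(u)` for every `c ≠ 0`. -/
theorem stmt2 {Ω : Type*} [MeasurableSpace Ω] (μ : Measure Ω) [IsProbabilityMeasure μ]
    (u : Ω → ℝ) (hu : Measurable u) (f0 : ℝ → ℝ) (hf0nn : ∀ t, 0 ≤ f0 t)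
    (hdens : μ.map u = MeasureTheory.volume.withDensity fun t => ENNReal.ofReal (f0 t))
    (hf0even : ∀ t, f0 (-t) = f0 t)
    (hf0mono : ∀ s t : ℝ, |s| ≤ |t| → f0 t ≤ f0 s)
    (hf0strict : ∃ ε > (0:ℝ), ∀ s t : ℝ, |s| < |t| → |t| ≤ ε → f0 t < f0 s)
    (ρ : ℝ → ℝ) (hρc : Continuous ρ) (hρe : ∀ t, ρ (-t) = ρ t) (hρz : ρ 0 = 0)
    (hρnn : ∀ t, 0 ≤ ρ t) (hρle : ∀ t, ρ t ≤ 1) (hρsup : (⨆ t, ρ t) = 1)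
    (hρmono : ∀ s t : ℝ, 0 ≤ s → s ≤ t → ρ s ≤ ρ t)
    (hρstrict : ∀ s t : ℝ, 0 ≤ s → s < t → ρ t < 1 → ρ s < ρ t) :
    ∀ c : ℝ, c ≠ 0 → ∫ ω, ρ (u ω) ∂μ < ∫ ω, ρ (u ω - c) ∂μ :=
  stmt2_general μ u hu f0 hf0nn hdens hf0mono hf0strict ρ hρc hρe hρz hρnn hρle hρmono hρstrict
end

section
/- Under the partially linear additive model $Y=\mu+\beta^{\top}Z+\sum_{j=1}^p\eta_j(X_j)+\sigma\varepsilon$ with $\varepsilon$ independent of $(Z,X)$, if $\rho$ is a bounded rho-function and the error density satisfies the symmetry/unimodality condition C1, then for any $\varsigma>0$ the population loss $L(a,b,g_1,\dots,g_p,\varsigma)=\mathbb{E}\,\rho\big((Y-a-b^{\top}Z-\sum_j g_j(X_j))/\varsigma\big)$ satisfies $L(\mu,\beta,\eta_1,\dots,\eta_p,\varsigma)\le L(a,b,g_1,\dots,g_p,\varsigma)$ for all $a\in\mathbb{R}$, $b\in\mathbb{R}^q$, and functions $g_j$ with $\int_0^1 g_j=0$. -/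
open MeasureTheory ProbabilityTheory Set

section Aux

variable {f0 : ℝ → ℝ}

lemma aux_f0_meas (hf0mono : ∀ s t : ℝ, |s| ≤ |t| → f0 t ≤ f0 s) :
    Measurable f0 := by
  have hanti : Antitone (fun x => f0 (max x 0)) := by
    intro x y hxy
    apply hf0mono
    rw [abs_of_nonneg (le_max_right x 0), abs_of_nonneg (le_max_right y 0)]
    exact max_le_max hxy le_rfl
  have heq : f0 = fun t => (fun x => f0 (max x 0)) |t| := by
    funext t
    simp only [max_eq_left (abs_nonneg t)]
    exact le_antisymm (hf0mono |t| t (by rw [abs_abs])) (hf0mono t |t| (by rw [abs_abs]))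
  rw [heq]
  exact hanti.measurable.comp measurable_abs

lemma aux_intervalA (hint : Integrable f0)
    (hf0mono : ∀ s t : ℝ, |s| ≤ |t| → f0 t ≤ f0 s) (c r : ℝ) (hr : 0 ≤ r) :
    ∫ t in (c - r)..(c + r), f0 t ≤ ∫ t in (-r)..r, f0 t := by
  have key : ∀ c : ℝ, 0 ≤ c → (∫ t in (c - r)..(c + r), f0 t) ≤ ∫ t in (-r)..r, f0 t := by
    intro c hc
    rcases le_or_gt (2 * r) c with hcase | hcase
    · -- far case : pointwise comparison after shifting
      have hshift : (∫ t in (-r)..r, f0 (t + c)) = ∫ t in (c - r)..(c + r), f0 t := by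
        rw [intervalIntegral.integral_comp_add_right]
        congr 1 <;> ring
      rw [← hshift]
      apply intervalIntegral.integral_mono_on (by linarith)
        (by simpa using (hint.intervalIntegrable (a := c - r) (b := c + r)).comp_add_right c)
        (hint.intervalIntegrable)
      intro t ht
      apply hf0mono
      have h1 : |t| ≤ r := abs_le.2 ⟨ht.1, ht.2⟩
      have h2 : r ≤ t + c := by linarith [ht.1]
      rw [abs_of_nonneg (by linarith : (0:ℝ) ≤ t + c)]
      linarith [abs_le.1 h1]
    · -- near case : split intervals
      have i1 : IntervalIntegrable f0 volume (c - r) r := hint.intervalIntegrable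
      have i2 : IntervalIntegrable f0 volume r (c + r) := hint.intervalIntegrable
      have i3 : IntervalIntegrable f0 volume (-r) (c - r) := hint.intervalIntegrable
      have e1 : (∫ t in (c - r)..(c + r), f0 t)
          = (∫ t in (c - r)..r, f0 t) + ∫ t in r..(c + r), f0 t :=
        (intervalIntegral.integral_add_adjacent_intervals i1 i2).symm
      have e2 : (∫ t in (-r)..r, f0 t)
          = (∫ t in (-r)..(c - r), f0 t) + ∫ t in (c - r)..r, f0 t :=
        (intervalIntegral.integral_add_adjacent_intervals i3 i1).symm
      have hshift : (∫ t in (-r)..(c - r), f0 (t + 2 * r)) = ∫ t in r..(c + r), f0 t := by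
        rw [intervalIntegral.integral_comp_add_right]
        congr 1 <;> ring
      have hmono : (∫ t in (-r)..(c - r), f0 (t + 2 * r)) ≤ ∫ t in (-r)..(c - r), f0 t := by
        apply intervalIntegral.integral_mono_on (by linarith)
          (by
            have ii := (hint.intervalIntegrable (a := r) (b := c + r)).comp_add_right (2 * r)
            rw [show r - 2 * r = -r by ring, show c + r - 2 * r = c - r by ring] at ii
            exact ii)
          (hint.intervalIntegrable)
        intro t ht
        apply hf0mono
        have h1 : |t| ≤ r := abs_le.2 ⟨ht.1, by linarith [ht.2]⟩
        rw [abs_of_nonneg (by linarith [abs_le.1 h1] : (0:ℝ) ≤ t + 2 * r)]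
        linarith [abs_le.1 h1]
      rw [e1, e2]
      linarith [hshift ▸ hmono]
  rcases le_or_gt 0 c with hc | hc
  · exact key c hc
  · have heven : ∀ t, f0 (-t) = f0 t := fun t =>
      le_antisymm (hf0mono t (-t) (by rw [abs_neg])) (hf0mono (-t) t (by rw [abs_neg]))
    have hflip : (∫ t in (c - r)..(c + r), f0 t) = ∫ t in (-c - r)..(-c + r), f0 t := by
      have : (∫ t in (-c - r)..(-c + r), f0 (-t)) = ∫ t in (c - r)..(c + r), f0 t := by
        rw [intervalIntegral.integral_comp_neg]
        congr 1 <;> ring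
      rw [← this]
      simp_rw [heven]
    rw [hflip]
    exact key (-c) (by linarith)


lemma aux_shift_le (hf0nn : ∀ t, 0 ≤ f0 t)
    (hf0mono : ∀ s t : ℝ, |s| ≤ |t| → f0 t ≤ f0 s) (hmeas : Measurable f0)
    (ν : Measure ℝ) [IsProbabilityMeasure ν]
    (hν : ν = MeasureTheory.volume.withDensity fun t => ENNReal.ofReal (f0 t))
    {h : ℝ → ℝ} (hhm : Measurable h) (hh0 : h 0 = 0) (hh1 : ∀ t, h t ≤ 1)
    (hhnn : ∀ t, 0 ≤ h t) (hhabs : ∀ s t : ℝ, |s| ≤ |t| → h s ≤ h t) (m : ℝ) :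
    ∫ t, h t ∂ν ≤ ∫ t, h (t + m) ∂ν := by
  -- f0 is integrable with lintegral 1
  have hlint : ∫⁻ t, ENNReal.ofReal (f0 t) = 1 := by
    have : ν Set.univ = 1 := measure_univ
    rw [hν, withDensity_apply _ MeasurableSet.univ, Measure.restrict_univ] at this
    exact this
  have hint : Integrable f0 := by
    refine ⟨hmeas.aestronglyMeasurable, ?_⟩
    rw [hasFiniteIntegral_iff_norm]
    have : ∀ t, ENNReal.ofReal ‖f0 t‖ = ENNReal.ofReal (f0 t) := fun t => by
      rw [Real.norm_eq_abs, abs_of_nonneg (hf0nn t)]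
    simp_rw [this, hlint]
    exact ENNReal.one_lt_top
  have hac : ν ≪ MeasureTheory.volume := by
    rw [hν]; exact withDensity_absolutelyContinuous _ _
  -- measure of closed symmetric-type intervals
  have hνIcc : ∀ a b : ℝ, a ≤ b → ν (Icc a b) = ENNReal.ofReal (∫ t in a..b, f0 t) := by
    intro a b hab
    rw [hν, withDensity_apply _ measurableSet_Icc,
      ← ofReal_integral_eq_lintegral_ofReal hint.integrableOn
        (Filter.Eventually.of_forall fun t => hf0nn t),
      MeasureTheory.integral_Icc_eq_integral_Ioc, ← intervalIntegral.integral_of_le hab]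
  have hνIccIoo : ∀ a b : ℝ, ν (Icc a b) = ν (Ioo a b) := by
    intro a b
    refine le_antisymm ?_ (measure_mono Ioo_subset_Icc_self)
    calc ν (Icc a b) ≤ ν (Ioo a b ∪ {a, b}) := by
          apply measure_mono
          intro t ht
          rcases eq_or_ne t a with rfl | ha
          · exact Or.inr (Or.inl rfl)
          rcases eq_or_ne t b with rfl | hb
          · exact Or.inr (Or.inr rfl)
          · exact Or.inl ⟨lt_of_le_of_ne ht.1 (Ne.symm ha), lt_of_le_of_ne ht.2 hb⟩
      _ ≤ ν (Ioo a b) + ν {a, b} := measure_union_le _ _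
      _ = ν (Ioo a b) := by
          rw [hac ((Set.toFinite ({a, b} : Set ℝ)).measure_zero _), add_zero]
  -- the key level-set comparison
  have hlevel : ∀ s : ℝ, 0 < s →
      ν {t | s < h t} ≤ ν {t | s < h (t + m)} := by
    intro s hs
    set B : Set ℝ := {t | h t ≤ s} with hB
    have hBmeas : MeasurableSet B := hhm measurableSet_Iic
    have h0B : (0:ℝ) ∈ B := by simp only [hB, mem_setOf_eq, hh0]; exact hs.le
    have hB'eq : {t : ℝ | h (t + m) ≤ s} = (fun t => t + m) ⁻¹' B := rfl
    have hcompl1 : {t | s < h t} = Bᶜ := by ext t; simp [hB, not_le]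
    have hcompl2 : {t | s < h (t + m)} = ((fun t => t + m) ⁻¹' B)ᶜ := by
      ext t; simp [hB, not_le]
    have hBmeas' : MeasurableSet ((fun t : ℝ => t + m) ⁻¹' B) :=
      hBmeas.preimage (measurable_add_const m)
    rw [hcompl1, hcompl2, measure_compl hBmeas (measure_ne_top ν B),
      measure_compl hBmeas' (measure_ne_top ν _), measure_univ]
    apply tsub_le_tsub_left
    -- now: ν ((· + m) ⁻¹' B) ≤ ν B
    by_cases hbd : BddAbove B
    · -- B is squeezed between Ioo (-r) r and Icc (-r) r where r = sSup B
      set r := sSup B with hr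
      have hr0 : 0 ≤ r := le_csSup hbd h0B
      have hBIcc : B ⊆ Icc (-r) r := by
        intro t ht
        have ht' : -t ∈ B := by
          simp only [hB, mem_setOf_eq] at ht ⊢
          exact le_trans (hhabs (-t) t (by rw [abs_neg])) ht
        exact ⟨by linarith [le_csSup hbd ht'], le_csSup hbd ht⟩
      have hIooB : Ioo (-r) r ⊆ B := by
        intro t ht
        have habs : |t| < r := abs_lt.2 ⟨ht.1, ht.2⟩
        obtain ⟨x, hxB, hx⟩ := exists_lt_of_lt_csSup ⟨0, h0B⟩ habs
        exact le_trans (hhabs t x (hx.le.trans (le_abs_self x))) hxB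
      have hνB : ν B = ν (Icc (-r) r) :=
        le_antisymm (measure_mono hBIcc)
          (by rw [hνIccIoo]; exact measure_mono hIooB)
      have hpre : (fun t : ℝ => t + m) ⁻¹' B ⊆ Icc (-r - m) (r - m) := by
        intro t ht
        have hmem : t + m ∈ B := ht
        have h2 := hBIcc hmem
        exact ⟨by linarith [h2.1], by linarith [h2.2]⟩
      calc ν ((fun t : ℝ => t + m) ⁻¹' B) ≤ ν (Icc (-r - m) (r - m)) := measure_mono hpre
        _ = ENNReal.ofReal (∫ t in (-r - m)..(r - m), f0 t) := hνIcc _ _ (by linarith)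
        _ ≤ ENNReal.ofReal (∫ t in (-r)..r, f0 t) := by
            apply ENNReal.ofReal_le_ofReal
            have := aux_intervalA hint hf0mono (-m) r hr0
            rw [show -m - r = -r - m by ring, show -m + r = r - m by ring] at this
            exact this
        _ = ν (Icc (-r) r) := (hνIcc _ _ (by linarith)).symm
        _ = ν B := hνB.symm
    · -- B unbounded : B = univ
      have hBuniv : B = univ := by
        ext t
        simp only [mem_univ, iff_true, hB, mem_setOf_eq]
        obtain ⟨x, hxB, hx⟩ := not_bddAbove_iff.1 hbd |t|
        exact le_trans (hhabs t x (le_trans hx.le (le_abs_self x))) hxB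
      rw [hBuniv]
      exact measure_mono (subset_univ _)
  -- convert to lintegrals via layer cake
  have hmeas2 : Measurable fun t => h (t + m) := hhm.comp (measurable_add_const m)
  have hlayer1 := lintegral_eq_lintegral_meas_lt ν
    (Filter.Eventually.of_forall fun t => hhnn t) hhm.aemeasurable
  have hlayer2 := lintegral_eq_lintegral_meas_lt ν
    (Filter.Eventually.of_forall fun t => hhnn (t + m)) hmeas2.aemeasurable
  have hlmono : ∫⁻ t, ENNReal.ofReal (h t) ∂ν ≤ ∫⁻ t, ENNReal.ofReal (h (t + m)) ∂ν := by
    rw [hlayer1, hlayer2]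
    apply lintegral_mono_ae
    rw [ae_restrict_iff' measurableSet_Ioi]
    exact Filter.Eventually.of_forall fun s hs => hlevel s hs
  have hfin : ∫⁻ t, ENNReal.ofReal (h (t + m)) ∂ν ≠ ⊤ := by
    apply ne_of_lt
    calc ∫⁻ t, ENNReal.ofReal (h (t + m)) ∂ν ≤ ∫⁻ _, 1 ∂ν := by
          apply lintegral_mono
          intro t
          simpa using ENNReal.ofReal_le_ofReal (hh1 (t + m))
      _ = 1 := by simp
      _ < ⊤ := ENNReal.one_lt_top
  rw [integral_eq_lintegral_of_nonneg_ae (Filter.Eventually.of_forall hhnn)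
      hhm.aestronglyMeasurable,
    integral_eq_lintegral_of_nonneg_ae (Filter.Eventually.of_forall fun t => hhnn (t + m))
      hmeas2.aestronglyMeasurable]
  exact ENNReal.toReal_mono hfin hlmono


end Aux

/-- Fisher-consistency of the robust loss for the partially linear additive model:
the true parameters minimize `L(a,b,g₁,…,g_p,ς)` over centered additive candidates. -/
theorem stmt3 {Ω : Type*} [MeasurableSpace Ω] (μ : Measure Ω) [IsProbabilityMeasure μ]
    {q p : ℕ} (Z : Ω → Fin q → ℝ) (X : Ω → Fin p → ℝ) (ε : Ω → ℝ)
    (hZ : Measurable Z) (hX : Measurable X) (hε : Measurable ε)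
    (hXrange : ∀ ω j, X ω j ∈ Set.Icc (0:ℝ) 1)
    (hind : IndepFun (fun ω => (Z ω, X ω)) ε μ)
    (μ0 σ : ℝ) (hσ : 0 < σ) (β : Fin q → ℝ) (η : Fin p → ℝ → ℝ)
    (hηc : ∀ j, Continuous (η j)) (hη0 : ∀ j, ∫ x in (0:ℝ)..1, η j x = 0)
    (Y : Ω → ℝ)
    (hY : ∀ ω, Y ω = μ0 + (∑ i, β i * Z ω i) + (∑ j, η j (X ω j)) + σ * ε ω)
    -- C1: the errors have an even density, nonincreasing in `|t|`, strictly decreasing near 0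
    (f0 : ℝ → ℝ) (hf0nn : ∀ t, 0 ≤ f0 t)
    (hdens : μ.map ε = MeasureTheory.volume.withDensity fun t => ENNReal.ofReal (f0 t))
    (hf0even : ∀ t, f0 (-t) = f0 t)
    (hf0mono : ∀ s t : ℝ, |s| ≤ |t| → f0 t ≤ f0 s)
    (hf0strict : ∃ e > (0:ℝ), ∀ s t : ℝ, |s| < |t| → |t| ≤ e → f0 t < f0 s)
    -- C2(a): bounded rho-function
    (ρ : ℝ → ℝ) (hρc : Continuous ρ) (hρe : ∀ t, ρ (-t) = ρ t) (hρz : ρ 0 = 0)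
    (hρnn : ∀ t, 0 ≤ ρ t) (hρle : ∀ t, ρ t ≤ 1) (hρsup : (⨆ t, ρ t) = 1)
    (hρmono : ∀ s t : ℝ, 0 ≤ s → s ≤ t → ρ s ≤ ρ t)
    (hρstrict : ∀ s t : ℝ, 0 ≤ s → s < t → ρ t < 1 → ρ s < ρ t) :
    ∀ ς : ℝ, 0 < ς → ∀ (a : ℝ) (b : Fin q → ℝ) (g : Fin p → ℝ → ℝ),
      (∀ j, Measurable (g j)) → (∀ j, ∫ x in (0:ℝ)..1, g j x = 0) →
      ∫ ω, ρ ((Y ω - μ0 - (∑ i, β i * Z ω i) - ∑ j, η j (X ω j)) / ς) ∂μ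
        ≤ ∫ ω, ρ ((Y ω - a - (∑ i, b i * Z ω i) - ∑ j, g j (X ω j)) / ς) ∂μ := by
  intro ς hς a b g hgm hg0
  set ν := μ.map ε with hνdef
  haveI : IsProbabilityMeasure ν := Measure.isProbabilityMeasure_map hε.aemeasurable
  -- the basic "loss profile" h
  set h : ℝ → ℝ := fun t => ρ (σ * t / ς) with hh
  have hρabs : ∀ x : ℝ, ρ x = ρ |x| := by
    intro x
    rcases abs_cases x with ⟨hx, _⟩ | ⟨hx, _⟩
    · rw [hx]
    · rw [hx, hρe]
  have hhm : Measurable h :=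
    (hρc.comp ((continuous_const.mul continuous_id).div_const ς)).measurable
  have hh0 : h 0 = 0 := by simp [hh, hρz]
  have hh1 : ∀ t, h t ≤ 1 := fun t => hρle _
  have hhnn : ∀ t, 0 ≤ h t := fun t => hρnn _
  have hhabs : ∀ s t : ℝ, |s| ≤ |t| → h s ≤ h t := by
    intro s t hst
    simp only [hh]
    rw [hρabs (σ * s / ς), hρabs (σ * t / ς)]
    apply hρmono _ _ (abs_nonneg _)
    rw [abs_div, abs_mul, abs_div, abs_mul, abs_of_pos hσ, abs_of_pos hς]
    gcongr
  -- the contamination W, a function of (Z, X) only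
  set φ : (Fin q → ℝ) × (Fin p → ℝ) → ℝ := fun zx =>
    (μ0 - a) + (∑ i, (β i - b i) * zx.1 i) + (∑ j, (η j (zx.2 j) - g j (zx.2 j))) with hφ
  have hφm : Measurable φ := by
    apply Measurable.add
    · apply Measurable.add measurable_const
      exact Finset.measurable_sum _ fun i _ =>
        measurable_const.mul ((measurable_pi_apply i).comp measurable_fst)
    · exact Finset.measurable_sum _ fun j _ =>
        ((hηc j).measurable.comp ((measurable_pi_apply j).comp measurable_snd)).sub
          ((hgm j).comp ((measurable_pi_apply j).comp measurable_snd))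
  set W : Ω → ℝ := fun ω => φ (Z ω, X ω) with hW
  have hWm : Measurable W := hφm.comp (hZ.prodMk hX)
  have hindWε : IndepFun W ε μ := hind.comp hφm measurable_id
  haveI : IsProbabilityMeasure (μ.map W) := Measure.isProbabilityMeasure_map hWm.aemeasurable
  set F : ℝ × ℝ → ℝ := fun x => ρ ((σ * x.2 + x.1) / ς) with hF
  have hFc : Continuous F :=
    hρc.comp (((continuous_const.mul continuous_snd).add continuous_fst).div_const ς)
  -- rewrite the LHS
  have hL : (∫ ω, ρ ((Y ω - μ0 - (∑ i, β i * Z ω i) - ∑ j, η j (X ω j)) / ς) ∂μ)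
      = ∫ t, h t ∂ν := by
    have step : (∫ ω, ρ ((Y ω - μ0 - (∑ i, β i * Z ω i) - ∑ j, η j (X ω j)) / ς) ∂μ)
        = ∫ ω, h (ε ω) ∂μ := by
      apply integral_congr_ae
      apply Filter.Eventually.of_forall
      intro ω
      simp only [hh]
      congr 1
      rw [hY ω]
      ring
    rw [step, hνdef, integral_map hε.aemeasurable hhm.aestronglyMeasurable]
  -- rewrite the RHS
  have hR : (∫ ω, ρ ((Y ω - a - (∑ i, b i * Z ω i) - ∑ j, g j (X ω j)) / ς) ∂μ)
      = ∫ ω, F (W ω, ε ω) ∂μ := by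
    apply integral_congr_ae
    apply Filter.Eventually.of_forall
    intro ω
    simp only [hF, hW, hφ]
    congr 1
    rw [hY ω]
    simp only [sub_mul, Finset.sum_sub_distrib]
    ring
  -- independence: the joint law is the product law
  have hmap : μ.map (fun ω => (W ω, ε ω)) = (μ.map W).prod ν :=
    (indepFun_iff_map_prod_eq_prod_map_map hWm.aemeasurable hε.aemeasurable).1 hindWε
  have hFint : Integrable F ((μ.map W).prod ν) := by
    refine Integrable.mono' (integrable_const 1) hFc.measurable.aestronglyMeasurable ?_
    refine Filter.Eventually.of_forall fun x => ?_
    rw [Real.norm_eq_abs, abs_of_nonneg (hρnn _)]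
    exact hρle _
  have hRHS : (∫ ω, F (W ω, ε ω) ∂μ) = ∫ w, ∫ e, F (w, e) ∂ν ∂(μ.map W) := by
    rw [← integral_map (hWm.prodMk hε).aemeasurable hFc.measurable.aestronglyMeasurable,
      hmap, MeasureTheory.integral_prod F hFint]
  -- pointwise lower bound on the inner integral
  have hinner : ∀ w : ℝ, (∫ t, h t ∂ν) ≤ ∫ e, F (w, e) ∂ν := by
    intro w
    have heq : (fun e => F (w, e)) = fun e => h (e + w / σ) := by
      funext e
      simp only [hF, hh]
      congr 1
      field_simp
    rw [heq]
    exact aux_shift_le hf0nn hf0mono (aux_f0_meas hf0mono) ν hdens hhm hh0 hh1 hhnn hhabs (w / σ)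
  have houter : (∫ t, h t ∂ν) ≤ ∫ w, ∫ e, F (w, e) ∂ν ∂(μ.map W) := by
    have h1 := integral_mono (integrable_const (∫ t, h t ∂ν)) hFint.integral_prod_left hinner
    simpa using h1
  rw [hL, hR, hRHS]
  exact houter
end

section
/- Let $b_t(Z,X)=\tilde Z^{\top}(d-\tau)+\sum_{j=1}^p(g_j-\eta_j)(X_j)$ and suppose $\mathbb{E}\,Z_m^4\|Z\|^2<\infty$. Then $\mathbb{E}\big[|Z_m|\,b_t^2(Z,X)\big]\le 2^{1/4}\big\{\max\big(\mathbb{E}Z_m^4\|\tilde Z\|^2,\,p^2\,\mathbb{E}Z_m^4\big)\big\}^{1/4}\big\{\|d-\tau\|^2+\max_{1\le j\le p}\|g_j-\eta_j\|_\infty^2\big\}^{1/4}\,\pi_{\mathbb{P}}^{3/2}(t,\theta)$, where $\pi_{\mathbb{P}}^2(t,\theta)=\mathbb{E}\,b_t^2(Z,X)$. -/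
/-!
Two applications of Cauchy–Schwarz interpolate between `E b²` and `E[Y⁴b²]` (here `Y = Z_m`):
`E[|Y| b²] ≤ (E[Y²b²])^{1/2} (E b²)^{1/2} ≤ (E[Y⁴b²])^{1/4} (E b²)^{3/4}`.
The last moment is bounded pointwise: by Cauchy–Schwarz in `ℝ × ℝ^q` the linear part of `b` has
square at most `(c² + ‖v‖²)(1 + ‖Z‖²)`, the additive part is at most `p G` in absolute value, and
`(x + y)² ≤ 2(x² + y²)` supplies the factor `2`.
-/

open MeasureTheory
open scoped RealInnerProductSpace

section Pointwise

variable {E : Type*} [NormedAddCommGroup E] [InnerProductSpace ℝ E]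

lemma sq_add_inner_le (c : ℝ) (v z : E) :
    (c + ⟪v, z⟫) ^ 2 ≤ (c ^ 2 + ‖v‖ ^ 2) * (1 + ‖z‖ ^ 2) := by
  have hvz := abs_real_inner_le_norm v z
  have hc : c * ⟪v, z⟫ ≤ |c| * (‖v‖ * ‖z‖) :=
    (le_abs_self _).trans ((abs_mul c _).trans_le (by gcongr))
  have hsq : ⟪v, z⟫ ^ 2 ≤ (‖v‖ * ‖z‖) ^ 2 := sq_le_sq' (abs_le.mp hvz).1 (abs_le.mp hvz).2
  nlinarith [sq_nonneg (|c| * ‖z‖ - ‖v‖), sq_abs c]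

lemma sq_add_inner_add_le (c w : ℝ) (v z : E) :
    (c + ⟪v, z⟫ + w) ^ 2 ≤ 2 * ((c ^ 2 + ‖v‖ ^ 2) * (1 + ‖z‖ ^ 2) + w ^ 2) :=
  add_sq_le.trans (by gcongr; exact sq_add_inner_le c v z)

end Pointwise

section Integral

variable {Ω : Type*} [MeasurableSpace Ω] {μ : Measure Ω}

lemma integral_abs_mul_le_rpow_mul_rpow {f g : Ω → ℝ}
    (hf : AEStronglyMeasurable f μ) (hg : AEStronglyMeasurable g μ)
    (hf2 : Integrable (fun ω => f ω ^ 2) μ) (hg2 : Integrable (fun ω => g ω ^ 2) μ) :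
    ∫ ω, |f ω * g ω| ∂μ ≤ (∫ ω, f ω ^ 2 ∂μ) ^ ((1:ℝ)/2) * (∫ ω, g ω ^ 2 ∂μ) ^ ((1:ℝ)/2) := by
  have hmem {h : Ω → ℝ} (hh : AEStronglyMeasurable h μ) (hh2 : Integrable (fun ω => h ω ^ 2) μ) :
      MemLp (fun ω => |h ω|) (ENNReal.ofReal 2) μ := by
    rw [ENNReal.ofReal_ofNat]
    simpa only [Real.norm_eq_abs] using ((memLp_two_iff_integrable_sq hh).2 hh2).norm
  have := integral_mul_le_Lp_mul_Lq_of_nonneg Real.HolderConjugate.two_two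
    (.of_forall fun ω => abs_nonneg (f ω)) (.of_forall fun ω => abs_nonneg (g ω))
    (hmem hf hf2) (hmem hg hg2)
  simpa only [abs_mul, Real.rpow_two, sq_abs] using this

lemma integral_abs_mul_sq_le {Y b : Ω → ℝ}
    (hY : AEStronglyMeasurable Y μ) (hb : AEStronglyMeasurable b μ)
    (hb2 : Integrable (fun ω => b ω ^ 2) μ) (hYb : Integrable (fun ω => Y ω ^ 4 * b ω ^ 2) μ) :
    ∫ ω, |Y ω| * b ω ^ 2 ∂μ
      ≤ (∫ ω, Y ω ^ 4 * b ω ^ 2 ∂μ) ^ ((1:ℝ)/4) * (∫ ω, b ω ^ 2 ∂μ) ^ ((3:ℝ)/4) := by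
  set J := ∫ ω, Y ω ^ 4 * b ω ^ 2 ∂μ
  set B := ∫ ω, b ω ^ 2 ∂μ
  have hJ : 0 ≤ J := integral_nonneg fun ω => by positivity
  have hB : 0 ≤ B := integral_nonneg fun ω => by positivity
  have hY2b : Integrable (fun ω => Y ω ^ 2 * b ω ^ 2) μ := by
    refine (hYb.add hb2).mono' ((hY.pow 2).mul (hb.pow 2)) (.of_forall fun ω => ?_)
    rw [Pi.add_apply, Real.norm_of_nonneg (by positivity)]
    nlinarith [mul_nonneg (sq_nonneg (Y ω)) (sq_nonneg (b ω)),
      mul_nonneg (sq_nonneg (Y ω ^ 2 - 1)) (sq_nonneg (b ω))]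
  have hCS₁ : ∫ ω, |Y ω| * b ω ^ 2 ∂μ
      ≤ (∫ ω, Y ω ^ 2 * b ω ^ 2 ∂μ) ^ ((1:ℝ)/2) * B ^ ((1:ℝ)/2) := by
    convert integral_abs_mul_le_rpow_mul_rpow (f := fun ω => Y ω * b ω) (hY.mul hb) hb
      (by simpa only [mul_pow] using hY2b) hb2 using 3 with ω ω
    · rw [abs_mul, abs_mul, mul_assoc, ← sq, sq_abs]
    · simp only [mul_pow]
  have hCS₂ : ∫ ω, Y ω ^ 2 * b ω ^ 2 ∂μ ≤ J ^ ((1:ℝ)/2) * B ^ ((1:ℝ)/2) := by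
    convert integral_abs_mul_le_rpow_mul_rpow (f := fun ω => Y ω ^ 2 * b ω) ((hY.pow 2).mul hb) hb
      (by simpa only [mul_pow, ← pow_mul] using hYb) hb2 using 3 with ω ω
    · rw [abs_mul, abs_mul, mul_assoc, ← sq, sq_abs, abs_of_nonneg (by positivity)]
    · simp only [J, mul_pow, ← pow_mul]
  calc ∫ ω, |Y ω| * b ω ^ 2 ∂μ
      ≤ (J ^ ((1:ℝ)/2) * B ^ ((1:ℝ)/2)) ^ ((1:ℝ)/2) * B ^ ((1:ℝ)/2) :=
        hCS₁.trans (by gcongr)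
    _ = J ^ ((1:ℝ)/4) * B ^ ((3:ℝ)/4) := by
        rw [Real.mul_rpow (by positivity) (by positivity), ← Real.rpow_mul hJ,
          ← Real.rpow_mul hB, mul_assoc, ← Real.rpow_add_of_nonneg hB (by norm_num) (by norm_num)]
        norm_num

lemma integrable_and_integral_le_mul_max {F H h : Ω → ℝ} {a c : ℝ}
    (hF : Integrable F μ) (hH : Integrable H μ) (hh : AEStronglyMeasurable h μ)
    (ha : 0 ≤ a) (hc : 0 ≤ c) (h0 : ∀ ω, 0 ≤ h ω) (hle : ∀ ω, h ω ≤ a * F ω + c * H ω) :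
    Integrable h μ ∧ ∫ ω, h ω ∂μ ≤ (a + c) * max (∫ ω, F ω ∂μ) (∫ ω, H ω ∂μ) := by
  have hbound : Integrable (fun ω => a * F ω + c * H ω) μ := (hF.const_mul a).add (hH.const_mul c)
  have hint : Integrable h μ :=
    hbound.mono' hh (.of_forall fun ω => by rw [Real.norm_of_nonneg (h0 ω)]; exact hle ω)
  refine ⟨hint, (integral_mono hint hbound hle).trans ?_⟩
  rw [integral_add (hF.const_mul a) (hH.const_mul c), integral_const_mul, integral_const_mul,
    add_mul]
  gcongr
  exacts [le_max_left _ _, le_max_right _ _]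

end Integral

theorem stmt14_general {Ω : Type*} [MeasurableSpace Ω] (μ : Measure Ω)
    {q p : ℕ} (Z : Ω → EuclideanSpace ℝ (Fin q)) (X : Ω → Fin p → ℝ)
    (hZ : Measurable Z) (hX : Measurable X) (m : Fin q)
    (d0 τ0 : ℝ) (dv τv : EuclideanSpace ℝ (Fin q)) (g η : Fin p → ℝ → ℝ)
    (hgm : ∀ j, Measurable (g j)) (hηm : ∀ j, Measurable (η j))
    (G : ℝ) (hGb : ∀ j x, |g j x - η j x| ≤ G)
    (b : Ω → ℝ)
    (hbdef : ∀ ω, b ω = (d0 - τ0) + ⟪dv - τv, Z ω⟫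
      + ∑ j, (g j (X ω j) - η j (X ω j)))
    (hmom : Integrable (fun ω => (Z ω m) ^ 4 * (1 + ‖Z ω‖ ^ 2)) μ)
    (hmom4 : Integrable (fun ω => (Z ω m) ^ 4) μ)
    (hb2 : Integrable (fun ω => (b ω) ^ 2) μ) :
    ∫ ω, |Z ω m| * (b ω) ^ 2 ∂μ
      ≤ (2 : ℝ) ^ ((1:ℝ)/4)
        * (max (∫ ω, (Z ω m) ^ 4 * (1 + ‖Z ω‖ ^ 2) ∂μ)
            ((p : ℝ) ^ 2 * ∫ ω, (Z ω m) ^ 4 ∂μ)) ^ ((1:ℝ)/4)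
        * (((d0 - τ0) ^ 2 + ‖dv - τv‖ ^ 2) + G ^ 2) ^ ((1:ℝ)/4)
        * (∫ ω, (b ω) ^ 2 ∂μ) ^ ((3:ℝ)/4) := by
  set S := (d0 - τ0) ^ 2 + ‖dv - τv‖ ^ 2
  have hZm : Measurable fun ω => Z ω m := by fun_prop
  have hbm : Measurable b := by
    rw [funext hbdef]
    fun_prop
  have hsum (ω : Ω) : |∑ j, (g j (X ω j) - η j (X ω j))| ≤ p * G := by
    simpa using (Finset.abs_sum_le_sum_abs _ Finset.univ).trans
      (Finset.sum_le_sum fun j _ => hGb j (X ω j))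
  have hb_sq (ω : Ω) : b ω ^ 2 ≤ 2 * (S * (1 + ‖Z ω‖ ^ 2) + p ^ 2 * G ^ 2) := by
    rw [hbdef, ← mul_pow]
    refine (sq_add_inner_add_le _ _ _ _).trans
      (mul_le_mul_of_nonneg_left (add_le_add le_rfl ?_) zero_le_two)
    exact sq_le_sq' (abs_le.mp (hsum ω)).1 (abs_le.mp (hsum ω)).2
  obtain ⟨hJint, hJ⟩ := integrable_and_integral_le_mul_max (h := fun ω => Z ω m ^ 4 * b ω ^ 2)
    hmom (hmom4.const_mul ((p : ℝ) ^ 2)) (by fun_prop) (by positivity : 0 ≤ 2 * S)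
    (by positivity : 0 ≤ 2 * G ^ 2) (fun ω => by positivity) fun ω =>
      (mul_le_mul_of_nonneg_left (hb_sq ω) (by positivity)).trans_eq (by ring)
  calc ∫ ω, |Z ω m| * b ω ^ 2 ∂μ
      ≤ (∫ ω, Z ω m ^ 4 * b ω ^ 2 ∂μ) ^ ((1:ℝ)/4) * (∫ ω, b ω ^ 2 ∂μ) ^ ((3:ℝ)/4) :=
        integral_abs_mul_sq_le hZm.aestronglyMeasurable hbm.aestronglyMeasurable hb2 hJint
    _ ≤ ((2 * S + 2 * G ^ 2) * max (∫ ω, Z ω m ^ 4 * (1 + ‖Z ω‖ ^ 2) ∂μ)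
          (∫ ω, p ^ 2 * Z ω m ^ 4 ∂μ)) ^ ((1:ℝ)/4) * (∫ ω, b ω ^ 2 ∂μ) ^ ((3:ℝ)/4) := by
        gcongr
    _ = _ := by
        have hmax : 0 ≤ max (∫ ω, Z ω m ^ 4 * (1 + ‖Z ω‖ ^ 2) ∂μ) (p ^ 2 * ∫ ω, Z ω m ^ 4 ∂μ) :=
          le_max_of_le_left (integral_nonneg fun ω => by positivity)
        rw [integral_const_mul, show 2 * S + 2 * G ^ 2 = 2 * (S + G ^ 2) by ring,
          Real.mul_rpow (by positivity) hmax, Real.mul_rpow zero_le_two (by positivity)]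
        ring

/-- Iterated Cauchy–Schwarz bound for the second-order remainder:
`E[|Z_m| b_t²] ≤ 2^{1/4} max(E Z_m⁴‖Z̃‖², p² E Z_m⁴)^{1/4} (‖d-τ‖² + max‖g-η‖∞²)^{1/4}
(E b_t²)^{3/4}`. -/
theorem stmt14 {Ω : Type*} [MeasurableSpace Ω] (μ : Measure Ω) [IsProbabilityMeasure μ]
    {q p : ℕ} (Z : Ω → EuclideanSpace ℝ (Fin q)) (X : Ω → Fin p → ℝ)
    (hZ : Measurable Z) (hX : Measurable X) (m : Fin q)
    (d0 τ0 : ℝ) (dv τv : EuclideanSpace ℝ (Fin q)) (g η : Fin p → ℝ → ℝ)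
    (hgm : ∀ j, Measurable (g j)) (hηm : ∀ j, Measurable (η j))
    (G : ℝ) (hG0 : 0 ≤ G) (hGb : ∀ j x, |g j x - η j x| ≤ G)
    (b : Ω → ℝ)
    (hbdef : ∀ ω, b ω = (d0 - τ0) + ⟪dv - τv, Z ω⟫
      + ∑ j, (g j (X ω j) - η j (X ω j)))
    (hmom : Integrable (fun ω => (Z ω m) ^ 4 * (1 + ‖Z ω‖ ^ 2)) μ)
    (hmom4 : Integrable (fun ω => (Z ω m) ^ 4) μ)
    (hb2 : Integrable (fun ω => (b ω) ^ 2) μ)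
    (hZb2 : Integrable (fun ω => |Z ω m| * (b ω) ^ 2) μ) :
    ∫ ω, |Z ω m| * (b ω) ^ 2 ∂μ
      ≤ (2 : ℝ) ^ ((1:ℝ)/4)
        * (max (∫ ω, (Z ω m) ^ 4 * (1 + ‖Z ω‖ ^ 2) ∂μ)
            ((p : ℝ) ^ 2 * ∫ ω, (Z ω m) ^ 4 ∂μ)) ^ ((1:ℝ)/4)
        * (((d0 - τ0) ^ 2 + ‖dv - τv‖ ^ 2) + G ^ 2) ^ ((1:ℝ)/4)
        * (∫ ω, (b ω) ^ 2 ∂μ) ^ ((3:ℝ)/4) :=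
  stmt14_general μ Z X hZ hX m d0 τ0 dv τv g η hgm hηm G hGb b hbdef hmom hmom4 hb2
end
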